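/- Let Q ⊆ ℕ² be the submonoid generated by (N,0), (0,N), (1,1). The ℂ-algebra homomorphism ℂ[Q] → ℂ[u,v] induced by the monoid inclusion Q ↪ ℕ² (i.e., sending the monomial of (a,b) ∈ Q to u^a v^b) is injective, with image equal to the invariant ring ℂ[u,v]^G for the cyclic group action g·u = εu, g·v = ε⁻¹v, where ε is a primitive N-th root of unity. -/

import Mathlib

/-!
The submonoid `Q` consists exactly of the points `(a, b)` with `a ≡ b [MOD N]`. Distinct points
of `Q` give distinct monomials `u^a v^b`, so the map is injective, and its image is spanned by
these monomials. The generator of `G` multiplies `u^a v^b` by `ε^a ε⁻¹^b`, which is `1` exactly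
when `a ≡ b [MOD N]`; hence a polynomial is invariant iff every monomial in its support comes
from `Q`.
-/

open MvPolynomial

theorem IsPrimitiveRoot.pow_mul_inv_pow_eq_one_iff {G₀ : Type*} [CommGroupWithZero G₀]
    {ζ : G₀} {k : ℕ} (hζ : IsPrimitiveRoot ζ k) (hk : 0 < k) (a b : ℕ) :
    ζ ^ a * ζ⁻¹ ^ b = 1 ↔ a ≡ b [MOD k] := by
  rw [inv_pow, ← zpow_natCast, ← zpow_natCast, ← zpow_neg, ← zpow_add₀ (hζ.ne_zero hk.ne'),
    hζ.zpow_eq_one_iff_dvd, Nat.modEq_iff_dvd, ← dvd_neg, neg_add, neg_neg, add_comm,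
    sub_eq_add_neg]

theorem mem_closure_iff_modEq (N a b : ℕ) :
    (a, b) ∈ AddSubmonoid.closure ({(N, 0), (0, N), (1, 1)} : Set (ℕ × ℕ)) ↔
      a ≡ b [MOD N] := by
  constructor
  · refine AddSubmonoid.closure_induction (motive := fun (p : ℕ × ℕ) _ ↦ p.1 ≡ p.2 [MOD N])
      ?_ Nat.ModEq.rfl fun _ _ _ _ hp hq ↦ hp.add hq
    rintro p (rfl | rfl | rfl)
    all_goals simp [Nat.ModEq]
  · intro h
    have gen {p : ℕ × ℕ} (hp : p ∈ ({(N, 0), (0, N), (1, 1)} : Set (ℕ × ℕ))) :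
        p ∈ AddSubmonoid.closure ({(N, 0), (0, N), (1, 1)} : Set (ℕ × ℕ)) :=
      AddSubmonoid.subset_closure hp
    rcases le_total a b with hab | hba
    · obtain ⟨k, hk⟩ := (Nat.modEq_iff_dvd' hab).mp h
      have hsum : (a, b) = a • ((1, 1) : ℕ × ℕ) + k • (0, N) := by
        rw [mul_comm] at hk
        ext <;> simp; omega
      exact hsum ▸ add_mem (nsmul_mem (gen (by simp)) a) (nsmul_mem (gen (by simp)) k)
    · obtain ⟨k, hk⟩ := (Nat.modEq_iff_dvd' hba).mp h.symm
      have hsum : (a, b) = b • ((1, 1) : ℕ × ℕ) + k • (N, 0) := by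
        rw [mul_comm] at hk
        ext <;> simp; omega
      exact hsum ▸ add_mem (nsmul_mem (gen (by simp)) b) (nsmul_mem (gen (by simp)) k)

namespace MvPolynomial

variable {R : Type*} [CommSemiring R]

theorem aeval_C_mul_X_monomial (s t : R) (m : Fin 2 →₀ ℕ) (c : R) :
    aeval ![C s * X 0, C t * X 1] (monomial m c) = monomial m (s ^ m 0 * t ^ m 1 * c) := by
  simp only [monomial_fin_two, map_mul, map_pow, aeval_C, aeval_X, algebraMap_eq,
    Matrix.cons_val_zero, Matrix.cons_val_one]
  ring

theorem coeff_aeval_C_mul_X (s t : R) (m : Fin 2 →₀ ℕ) (f : MvPolynomial (Fin 2) R) :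
    coeff m (aeval ![C s * X 0, C t * X 1] f) = s ^ m 0 * t ^ m 1 * coeff m f := by
  induction f using MvPolynomial.induction_on' with
  | monomial u c =>
    rw [aeval_C_mul_X_monomial, coeff_monomial, coeff_monomial]
    split_ifs with h
    · rw [h]
    · rw [mul_zero]
  | add p q hp hq => rw [map_add, coeff_add, coeff_add, hp, hq, mul_add]

theorem aeval_C_mul_X_eq_self_iff [IsRightCancelMulZero R] (s t : R)
    (f : MvPolynomial (Fin 2) R) :
    aeval ![C s * X 0, C t * X 1] f = f ↔ ∀ m ∈ f.support, s ^ m 0 * t ^ m 1 = 1 := by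
  simp only [MvPolynomial.ext_iff, coeff_aeval_C_mul_X, mem_support_iff, mul_left_eq_self₀]
  exact forall_congr' fun m ↦ or_iff_not_imp_right

end MvPolynomial

section

variable {R : Type*} [CommSemiring R] {S : AddSubmonoid (ℕ × ℕ)}
  {φ : AddMonoidAlgebra R S →ₐ[R] MvPolynomial (Fin 2) R}

theorem map_single_eq_monomial
    (hφ : ∀ q : S,
      φ (AddMonoidAlgebra.single q 1) = X 0 ^ (q : ℕ × ℕ).1 * X 1 ^ (q : ℕ × ℕ).2)
    (q : S) (c : R) :
    φ (AddMonoidAlgebra.single q c) = monomial ((finTwoArrowEquiv' ℕ).symm q) c := by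
  rw [monomial_fin_two, ← mul_one c, ← AddMonoidAlgebra.smul_single', map_smul, hφ,
    smul_eq_C_mul, mul_one, mul_assoc]
  simp [finTwoArrowEquiv']

theorem injective_of_map_single
    (hφ : ∀ q : S,
      φ (AddMonoidAlgebra.single q 1) = X 0 ^ (q : ℕ × ℕ).1 * X 1 ^ (q : ℕ × ℕ).2) :
    Function.Injective φ := by
  have hφ_eq : ⇑φ = AddMonoidAlgebra.mapDomain fun q : S ↦ (finTwoArrowEquiv' ℕ).symm q := by
    ext p : 1
    induction p using AddMonoidAlgebra.induction_linear with
    | zero => simp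
    | add p q hp hq => rw [map_add, hp, hq, AddMonoidAlgebra.mapDomain_add]
    | single q c => rw [AddMonoidAlgebra.mapDomain_single, map_single_eq_monomial hφ]; rfl
  rw [hφ_eq]
  exact AddMonoidAlgebra.mapDomain_injective <|
    (finTwoArrowEquiv' ℕ).symm.injective.comp Subtype.val_injective

theorem mem_range_iff_of_map_single
    (hφ : ∀ q : S,
      φ (AddMonoidAlgebra.single q 1) = X 0 ^ (q : ℕ × ℕ).1 * X 1 ^ (q : ℕ × ℕ).2)
    (f : MvPolynomial (Fin 2) R) :
    f ∈ φ.range ↔ ∀ m ∈ f.support, (m 0, m 1) ∈ S := by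
  refine ⟨fun hf ↦ ?_, fun hf ↦ ?_⟩
  · obtain ⟨p, rfl⟩ := φ.mem_range.mp hf
    clear hf
    induction p using AddMonoidAlgebra.induction_linear with
    | zero => simp
    | add p q hp hq =>
      intro m hm
      rw [map_add] at hm
      exact (Finset.mem_union.mp (support_add hm)).elim (hp m) (hq m)
    | single q c =>
      intro m hm
      rw [map_single_eq_monomial hφ] at hm
      rw [Finset.mem_singleton.mp (support_monomial_subset hm)]
      simp
  · rw [f.as_sum]
    refine Subalgebra.sum_mem _ fun m hm ↦
      φ.mem_range.mpr ⟨AddMonoidAlgebra.single ⟨(m 0, m 1), hf m hm⟩ (coeff m f), ?_⟩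
    rw [map_single_eq_monomial hφ]
    exact congrArg (monomial · _) ((finTwoArrowEquiv' ℕ).symm_apply_apply m)

end

/-- The `ℂ`-algebra map `ℂ[Q] → ℂ[u,v]` induced by the inclusion `Q ↪ ℕ²` (sending the
monomial of `(a,b) ∈ Q` to `u^a v^b`) is injective, with image the invariant ring
`ℂ[u,v]^G` for the cyclic action `u ↦ εu`, `v ↦ ε⁻¹v`, `ε` a primitive `N`-th root of 1. -/
theorem monoidAlgebra_map_injective_range (N : ℕ) (hN : 0 < N) (ε : ℂ)
    (hε : IsPrimitiveRoot ε N)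
    (φ : AddMonoidAlgebra ℂ
          (AddSubmonoid.closure ({(N, 0), (0, N), (1, 1)} : Set (ℕ × ℕ)))
        →ₐ[ℂ] MvPolynomial (Fin 2) ℂ)
    (hφ : ∀ q : AddSubmonoid.closure ({(N, 0), (0, N), (1, 1)} : Set (ℕ × ℕ)),
      φ (AddMonoidAlgebra.single q 1) = X 0 ^ (q : ℕ × ℕ).1 * X 1 ^ (q : ℕ × ℕ).2) :
    Function.Injective φ
    ∧ φ.range
      = AlgHom.equalizer
          (aeval ![C ε * X 0, C ε⁻¹ * X 1] :
            MvPolynomial (Fin 2) ℂ →ₐ[ℂ] MvPolynomial (Fin 2) ℂ)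
          (AlgHom.id ℂ (MvPolynomial (Fin 2) ℂ)) := by
  refine ⟨injective_of_map_single hφ, SetLike.ext fun f ↦ ?_⟩
  rw [mem_range_iff_of_map_single hφ, AlgHom.mem_equalizer, AlgHom.id_apply,
    aeval_C_mul_X_eq_self_iff]
  simp only [hε.pow_mul_inv_pow_eq_one_iff hN, mem_closure_iff_modEq]
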